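/- arXiv:1705.04507 — 2 statements merged into one kernel-verified Lean document; each statement's English description precedes it below -/
import Mathlib

section
/- Let f be a bent Boolean function on F_2^{2m} with m ≥ 1 and f(0) = 0, with dual f̂ and weight class wc(f). Define the graph R(f) on vertex set F_2^{2m} in which distinct x, z are adjacent iff |{y | f(y) = 1 and ⟨x+z, y⟩ = 1}| = 2^{2m-2} - 2^{m-1} when wc(f) = 0, respectively |{y | f(y) = 1 and ⟨x+z, y⟩ = 1}| = 2^{2m-2} + 2^{m-1} when wc(f) = 1. Then R(f) is isomorphic to the Cayley graph of the Boolean function x ↦ f̂(x) + wc(f). -/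
open Finset

/-- Inner product on `F_2^n`. -/
def dotp {n : ℕ} (x y : Fin n → ZMod 2) : ZMod 2 := ∑ i, x i * y i

/-- Hamming weight of a Boolean function: the cardinality of its support. -/
def wt {n : ℕ} (f : (Fin n → ZMod 2) → ZMod 2) : ℕ :=
  (Finset.univ.filter fun x => f x = 1).card

/-- Walsh–Hadamard transform of a Boolean function. -/
def walsh {n : ℕ} (f : (Fin n → ZMod 2) → ZMod 2) (x : Fin n → ZMod 2) : ℤ :=
  ∑ y : Fin n → ZMod 2, (-1 : ℤ) ^ (f y + dotp x y).val

/-- A Boolean function on `F_2^(2m)` is bent if its Walsh–Hadamard transform has constant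
absolute value `2^m`. -/
def IsBent {m : ℕ} (f : (Fin (2 * m) → ZMod 2) → ZMod 2) : Prop :=
  ∀ x, |walsh f x| = 2 ^ m

/-- The dual of a bent function: `f̂ x = 0` if `W_f x = 2^m`, and `1` otherwise
(for bent `f` the other case is exactly `W_f x = -2^m`). -/
def dual {m : ℕ} (f : (Fin (2 * m) → ZMod 2) → ZMod 2) :
    (Fin (2 * m) → ZMod 2) → ZMod 2 :=
  fun x => if walsh f x = 2 ^ m then 0 else 1

/-- The weight class of a bent function on `F_2^(2m)`:
`0` if its weight is `2^(2m-1) - 2^(m-1)`, and `1` otherwise. -/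
def wc {m : ℕ} (f : (Fin (2 * m) → ZMod 2) → ZMod 2) : ZMod 2 :=
  if wt f = 2 ^ (2 * m - 1) - 2 ^ (m - 1) then 0 else 1

/-- The Cayley graph of a Boolean function: distinct `x`, `y` are adjacent iff `f (x+y) = 1`. -/
def cayley {n : ℕ} (f : (Fin n → ZMod 2) → ZMod 2) : SimpleGraph (Fin n → ZMod 2) where
  Adj x y := x ≠ y ∧ f (x + y) = 1
  symm := ⟨fun x y h => ⟨h.1.symm, by rw [add_comm]; exact h.2⟩⟩
  loopless := ⟨fun x h => h.1 rfl⟩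

instance cayleyAdjDecidable {n : ℕ} (f : (Fin n → ZMod 2) → ZMod 2) :
    DecidableRel (cayley f).Adj :=
  fun x y => inferInstanceAs (Decidable (x ≠ y ∧ f (x + y) = 1))

/-- The weight of the codeword of `C(f)` corresponding to `x`. -/
def codewordWeight {m : ℕ} (f : (Fin (2 * m) → ZMod 2) → ZMod 2)
    (x : Fin (2 * m) → ZMod 2) : ℕ :=
  (Finset.univ.filter fun y => f y = 1 ∧ dotp x y = 1).card

/-- The graph `R(f)`: distinct `x`, `z` are adjacent iff the weight of the codeword
corresponding to `x + z` equals `2^(2m-2) - 2^(m-1)` if `wc f = 0`, and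
`2^(2m-2) + 2^(m-1)` if `wc f = 1`. -/
def Rgraph {m : ℕ} (f : (Fin (2 * m) → ZMod 2) → ZMod 2) :
    SimpleGraph (Fin (2 * m) → ZMod 2) where
  Adj x z := x ≠ z ∧
    codewordWeight f (x + z) =
      (if wc f = 0 then 2 ^ (2 * m - 2) - 2 ^ (m - 1) else 2 ^ (2 * m - 2) + 2 ^ (m - 1))
  symm := ⟨fun x z h => ⟨h.1.symm, by rw [add_comm]; exact h.2⟩⟩
  loopless := ⟨fun x h => h.1 rfl⟩

/-! For `a ≠ 0` the hyperplane `{y | ⟨a, y⟩ = 1}` has exactly `2^(2m-1)` points, so expanding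
`(-1)^(f y + ⟨a, y⟩)` gives `W_f(a) = 4 c(a) - 2 wt(f)`, where `c = codewordWeight f`, while
`W_f(0) = 2^(2m) - 2 wt(f)`. Hence `4 c(a) = 2^(2m) + W_f(a) - W_f(0)`. For bent `f` both
transforms are `±2^m`, and the sign of `W_f(0)` is the weight class: `wc(f) = f̂(0)`. So `c(a)`
hits the threshold defining `R(f)` exactly when `W_f(a) = -W_f(0)`, i.e. when
`f̂(a) + wc(f) = 1`, and the identity map is the isomorphism. -/

lemma neg_one_pow_val_add (u v : ZMod 2) :
    (-1 : ℤ) ^ (u + v).val = 1 - 2 * (if u = 1 then 1 else 0) - 2 * (if v = 1 then 1 else 0)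
      + 4 * (if u = 1 ∧ v = 1 then 1 else 0) := by
  revert u v; decide

lemma neg_one_pow_val_add_neg_one_pow_val_eq_zero_iff (u v : ZMod 2) :
    (-1 : ℤ) ^ u.val + (-1) ^ v.val = 0 ↔ u + v = 1 := by
  revert u v; decide

lemma ZModModule.add_ne_zero_of_ne {G : Type*} [AddCommGroup G] [Module (ZMod 2) G] {x z : G}
    (h : x ≠ z) : x + z ≠ 0 := by
  rwa [← ZModModule.sub_eq_add, sub_ne_zero]

lemma two_mul_card_dotp_eq_one {n : ℕ} {x : Fin n → ZMod 2} (hx : x ≠ 0) :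
    2 * #{y | dotp x y = 1} = 2 ^ n := by
  obtain ⟨i, hi⟩ := Function.ne_iff.mp hx
  let φ : (Fin n → ZMod 2) →+ ZMod 2 := AddMonoidHom.mk' (dotp x) (dotProduct_add x)
  have hφ : φ (Pi.single i 1) = 1 := by
    change x ⬝ᵥ Pi.single i 1 = 1
    rw [dotProduct_single, mul_one]
    exact (by decide : ∀ v : ZMod 2, v ≠ 0 → v = 1) _ hi
  have hfiber : #{y | φ y = 1} = #{y | φ y = 0} :=
    AddMonoidHom.card_fiber_eq_of_mem_range φ ⟨_, hφ⟩ ⟨0, map_zero φ⟩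
  have hsplit : #{y | φ y = 1} + #{y | φ y = 0} = 2 ^ n := by
    have hne : ∀ v : ZMod 2, ¬v = 1 ↔ v = 0 := by decide
    simpa [hne] using card_filter_add_card_filter_not (s := univ) (fun y => φ y = 1)
  have : #{y | dotp x y = 1} = #{y | φ y = 1} := rfl
  omega

section Bent

variable {m : ℕ} {f : (Fin (2 * m) → ZMod 2) → ZMod 2}

variable (f) in
lemma walsh_eq_wt_card_codewordWeight (x : Fin (2 * m) → ZMod 2) :
    walsh f x = 2 ^ (2 * m) - 2 * wt f - 2 * #{y | dotp x y = 1} + 4 * codewordWeight f x := by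
  simp only [walsh, neg_one_pow_val_add, sum_add_distrib, sum_sub_distrib, ← mul_sum, sum_boole,
    sum_const, card_univ, Fintype.card_pi, ZMod.card, prod_const, Fintype.card_fin, wt,
    codewordWeight]
  simp

lemma walsh_zero : walsh f 0 = 2 ^ (2 * m) - 2 * wt f := by
  simpa [dotp, codewordWeight] using walsh_eq_wt_card_codewordWeight f 0

lemma walsh_eq_of_ne_zero {a : Fin (2 * m) → ZMod 2} (ha : a ≠ 0) :
    walsh f a = 4 * codewordWeight f a - 2 * wt f := by
  have h : (2 * #{y | dotp a y = 1} : ℤ) = 2 ^ (2 * m) := by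
    exact_mod_cast two_mul_card_dotp_eq_one ha
  linear_combination walsh_eq_wt_card_codewordWeight f a - h

lemma IsBent.walsh_eq (hf : IsBent f) (x : Fin (2 * m) → ZMod 2) :
    walsh f x = (-1) ^ (dual f x).val * 2 ^ m := by
  rcases (abs_eq (by positivity)).mp (hf x) with h | h
  · simp [dual, h]
  · have : walsh f x ≠ 2 ^ m := by rw [h]; linarith [pow_pos (two_pos (α := ℤ)) m]
    rw [dual, if_neg this, h, ZMod.val_one, pow_one, neg_one_mul]

lemma IsBent.four_mul_codewordWeight (hf : IsBent f) {a : Fin (2 * m) → ZMod 2} (ha : a ≠ 0) :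
    4 * (codewordWeight f a : ℤ) =
      2 ^ (2 * m) + ((-1) ^ (dual f a).val - (-1) ^ (dual f 0).val) * 2 ^ m := by
  linear_combination -walsh_eq_of_ne_zero (f := f) ha + walsh_zero (f := f) + hf.walsh_eq a
    - hf.walsh_eq 0

lemma IsBent.wc_eq_dual_zero (hf : IsBent f) (hm : 1 ≤ m) : wc f = dual f 0 := by
  obtain ⟨k, rfl⟩ := Nat.exists_eq_add_of_le' hm
  have h := walsh_zero (f := f)
  rw [hf.walsh_eq] at h
  rw [wc, show 2 * (k + 1) - 1 = 2 * k + 1 by omega, Nat.add_sub_cancel]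
  have hk : 0 < 2 ^ k := by positivity
  rcases (by decide : ∀ c : ZMod 2, c = 0 ∨ c = 1) (dual f 0) with hc | hc <;>
    rw [hc] at h ⊢
  · have hwt : wt f + 2 ^ k = 2 ^ (2 * k + 1) := by
      have : 2 * (wt f + 2 ^ k : ℤ) = 2 * 2 ^ (2 * k + 1) := by
        rw [ZMod.val_zero] at h
        linear_combination h
      exact_mod_cast mul_left_cancel₀ two_ne_zero this
    rw [if_pos (by omega)]
  · have hwt : wt f = 2 ^ (2 * k + 1) + 2 ^ k := by
      have : 2 * (wt f : ℤ) = 2 * (2 ^ (2 * k + 1) + 2 ^ k) := by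
        rw [ZMod.val_one] at h
        linear_combination h
      exact_mod_cast mul_left_cancel₀ two_ne_zero this
    rw [if_neg]
    generalize 2 ^ (2 * k + 1) = Q at hwt ⊢
    omega

lemma IsBent.codewordWeight_eq_iff (hf : IsBent f) {a : Fin (2 * m) → ZMod 2} (ha : a ≠ 0) :
    codewordWeight f a =
        (if wc f = 0 then 2 ^ (2 * m - 2) - 2 ^ (m - 1) else 2 ^ (2 * m - 2) + 2 ^ (m - 1)) ↔
      dual f a + wc f = 1 := by
  have hm : 1 ≤ m := Nat.pos_of_ne_zero (by rintro rfl; exact ha (funext fun i => i.elim0))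
  have h := hf.four_mul_codewordWeight ha
  rw [hf.wc_eq_dual_zero hm]
  obtain ⟨k, rfl⟩ := Nat.exists_eq_add_of_le' hm
  rw [show 2 * (k + 1) - 2 = 2 * k by omega, Nat.add_sub_cancel]
  have hT : (((if dual f 0 = 0 then 2 ^ (2 * k) - 2 ^ k else 2 ^ (2 * k) + 2 ^ k : ℕ)) : ℤ) =
      2 ^ (2 * k) - (-1) ^ (dual f 0).val * 2 ^ k := by
    have hkk : 2 ^ k ≤ 2 ^ (2 * k) := Nat.pow_le_pow_right two_pos (by omega)
    rcases (by decide : ∀ c : ZMod 2, c = 0 ∨ c = 1) (dual f 0) with hc | hc <;>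
      simp [hc, hkk, ZMod.val_one]
  calc _ ↔ 4 * (codewordWeight f a : ℤ) = 4 * (2 ^ (2 * k) - (-1) ^ (dual f 0).val * 2 ^ k) := by
        rw [← hT, mul_right_inj' four_ne_zero, Nat.cast_inj]
    _ ↔ ((-1) ^ (dual f a).val + (-1) ^ (dual f 0).val) * (2 : ℤ) ^ (k + 1) = 0 := by
        rw [h]; constructor <;> intro h' <;> linear_combination h'
    _ ↔ dual f a + dual f 0 = 1 := by
        simp [neg_one_pow_val_add_neg_one_pow_val_eq_zero_iff]

end Bent

theorem Rgraph_iso_cayley_dual_general {m : ℕ}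
    (f : (Fin (2 * m) → ZMod 2) → ZMod 2) (hf : IsBent f) :
    Nonempty (Rgraph f ≃g cayley (fun x => dual f x + wc f)) :=
  ⟨⟨Equiv.refl _, fun {_ _} => and_congr_right fun hxz =>
    (hf.codewordWeight_eq_iff (ZModModule.add_ne_zero_of_ne hxz)).symm⟩⟩

/-- for a bent function `f` on `F_2^(2m)` with `f 0 = 0`, the graph `R(f)` is
isomorphic to the Cayley graph of `x ↦ f̂ x + wc f`. -/
theorem Rgraph_iso_cayley_dual {m : ℕ} (hm : 1 ≤ m)
    (f : (Fin (2 * m) → ZMod 2) → ZMod 2) (hf : IsBent f) (h0 : f 0 = 0) :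
    Nonempty (Rgraph f ≃g cayley (fun x => dual f x + wc f)) :=
  Rgraph_iso_cayley_dual_general f hf
end

section
/- Let f be a bent Boolean function on F_2^{2m}, and let h(x) := f(A x + b) + ⟨c, x⟩ + δ for some invertible F_2-linear map A on F_2^{2m}, b, c ∈ F_2^{2m} and δ ∈ F_2 (so h is extended affine equivalent to f). Then there exist b', c' ∈ F_2^{2m} and δ' ∈ F_2 such that the function g(x) := f(x + b') + ⟨c', x⟩ + δ' is bent and the Cayley graphs of x ↦ g(x) + g(0) and x ↦ h(x) + h(0) are isomorphic. That is, every bent function extended affine equivalent to f is extended Cayley equivalent to a bent function extended translation equivalent to f. -/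
open Finset

open Matrix

/-!
An invertible linear change of variables is a graph isomorphism between Cayley graphs, so
`h ∘ A⁻¹` has the same (normalised) Cayley graph as `h`. Since `x ↦ ⟨c, A⁻¹ x⟩` is again a
linear form `x ↦ ⟨c', x⟩`, the function `h ∘ A⁻¹ = f(· + b) + ⟨c', ·⟩ + δ` is ET equivalent to `f`,
and translating the argument and adding an affine function only changes the Walsh transform
by a sign and a shift of the argument, so it stays bent.
-/

lemma dotp_eq_dotProduct {n : ℕ} (x y : Fin n → ZMod 2) : dotp x y = x ⬝ᵥ y := rfl

lemma dotp_linearMap_apply {n : ℕ} (L : (Fin n → ZMod 2) →ₗ[ZMod 2] (Fin n → ZMod 2))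
    (c x : Fin n → ZMod 2) :
    dotp c (L x) = dotp (c ᵥ* LinearMap.toMatrix' L) x := by
  rw [dotp_eq_dotProduct, ← LinearMap.toMatrix'_mulVec, dotProduct_mulVec, dotp_eq_dotProduct]

lemma neg_one_pow_val_add_s10 (a b : ZMod 2) :
    (-1 : ℤ) ^ (a + b).val = (-1) ^ a.val * (-1) ^ b.val := by
  revert a b; decide

lemma walsh_translate_add_linear {n : ℕ} (f : (Fin n → ZMod 2) → ZMod 2)
    (b c : Fin n → ZMod 2) (δ : ZMod 2) (u : Fin n → ZMod 2) :
    walsh (fun x => f (x + b) + dotp c x + δ) u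
      = (-1) ^ (δ + dotp (u + c) b).val * walsh f (u + c) := by
  unfold walsh
  rw [Finset.mul_sum]
  refine Fintype.sum_equiv (Equiv.addRight b) _ _ fun x => ?_
  -- the cross terms `⟨u + c, b⟩` occur twice and cancel in characteristic 2
  have hexp : f (x + b) + dotp c x + δ + dotp u x
      = (δ + dotp (u + c) b) + (f (x + b) + dotp (u + c) (x + b)) := by
    simp only [dotp_eq_dotProduct, add_dotProduct, dotProduct_add]
    linear_combination -(u ⬝ᵥ b + c ⬝ᵥ b) * CharTwo.two_eq_zero (R := ZMod 2)
  rw [Equiv.coe_addRight, hexp, neg_one_pow_val_add_s10]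

lemma IsBent.translate_add_linear {m : ℕ} {f : (Fin (2 * m) → ZMod 2) → ZMod 2}
    (hf : IsBent f) (b c : Fin (2 * m) → ZMod 2) (δ : ZMod 2) :
    IsBent (fun x => f (x + b) + dotp c x + δ) := by
  intro u
  rw [walsh_translate_add_linear, abs_mul, abs_pow, abs_neg, abs_one, one_pow, one_mul]
  exact hf (u + c)

def cayleyIsoOfAddEquiv {n : ℕ} (L : (Fin n → ZMod 2) ≃+ (Fin n → ZMod 2))
    (g : (Fin n → ZMod 2) → ZMod 2) : cayley (g ∘ L) ≃g cayley g where
  toEquiv := L.toEquiv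
  map_rel_iff' {x y} := by
    change (L x ≠ L y ∧ g (L x + L y) = 1) ↔ (x ≠ y ∧ g (L (x + y)) = 1)
    rw [map_add, L.injective.ne_iff]

/-- every bent function extended affine equivalent to `f` is extended Cayley
equivalent to a bent function extended translation equivalent to `f`. -/
theorem EA_implies_ET_and_EC {m : ℕ} (f : (Fin (2 * m) → ZMod 2) → ZMod 2)
    (hf : IsBent f)
    (A : (Fin (2 * m) → ZMod 2) ≃ₗ[ZMod 2] (Fin (2 * m) → ZMod 2))
    (b c : Fin (2 * m) → ZMod 2) (δ : ZMod 2)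
    (h : (Fin (2 * m) → ZMod 2) → ZMod 2)
    (hh : ∀ x, h x = f (A x + b) + dotp c x + δ) :
    ∃ (b' c' : Fin (2 * m) → ZMod 2) (δ' : ZMod 2),
      IsBent (fun x => f (x + b') + dotp c' x + δ') ∧
      Nonempty
        (cayley (fun x => (f (x + b') + dotp c' x + δ') +
                          (f ((0 : Fin (2 * m) → ZMod 2) + b') + dotp c' 0 + δ')) ≃g
         cayley (fun x => h x + h 0)) := by
  set c' := c ᵥ* LinearMap.toMatrix' A.symm.toLinearMap
  have h_symm : ∀ w, f (w + b) + dotp c' w + δ = h (A.symm w) := fun w => by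
    rw [hh, A.apply_symm_apply, ← A.symm.coe_toLinearMap, dotp_linearMap_apply]
  have h_comp : (fun x => (f (x + b) + dotp c' x + δ) + (f (0 + b) + dotp c' 0 + δ))
      = (fun x => h x + h 0) ∘ A.symm := by
    funext x
    rw [Function.comp_apply, h_symm x, h_symm 0, map_zero]
  exact ⟨b, c', δ, hf.translate_add_linear b c' δ,
    ⟨h_comp ▸ cayleyIsoOfAddEquiv A.symm.toAddEquiv (fun x => h x + h 0)⟩⟩
end
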